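/- In the merge rule R2, the merged automaton A3 (with componentwise-minimum guard lower bounds and componentwise-maximum invariant upper bounds of A1 and A2) timed-simulates both A1 and A2. -/
import Mathlib


/-- The discrete structure of a timed automaton (locations, clocks, edges, actions, resets). -/
structure TAStruct (Act : Type) where
  Loc : Type
  Clock : Type
  Edge : Type
  init : Loc
  src : Edge → Loc
  tgt : Edge → Loc
  act : Edge → Act
  reset : Edge → Clock → Bool

/-- Numeric bounds: guards are conjunctions of lower bounds `x ≥ n` on edges,
invariants conjunctions of upper bounds `x ≤ m` on locations. -/
structure Bounds {Act : Type} (S : TAStruct Act) where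
  guard : S.Edge → S.Clock → ℕ
  inv : S.Loc → S.Clock → ℕ

/-- A state of the LTS semantics: a location and a clock valuation. -/
abbrev TAState {Act : Type} (S : TAStruct Act) := S.Loc × (S.Clock → ℝ)

def initState {Act : Type} (S : TAStruct Act) : TAState S := (S.init, fun _ => 0)

/-- LTS semantics: delay transitions (respecting the invariant throughout) and
discrete transitions via edges whose guard holds and whose target invariant permits. -/
inductive Step {Act : Type} (S : TAStruct Act) (B : Bounds S) :
    TAState S → (ℝ ⊕ Act) → TAState S → Prop
  | delay (l : S.Loc) (u : S.Clock → ℝ) (d : ℝ) :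
      0 ≤ d →
      (∀ d' : ℝ, 0 ≤ d' → d' ≤ d → ∀ x, u x + d' ≤ (B.inv l x : ℝ)) →
      Step S B (l, u) (Sum.inl d) (l, fun x => u x + d)
  | disc (e : S.Edge) (u : S.Clock → ℝ) :
      (∀ x, (B.guard e x : ℝ) ≤ u x) →
      (∀ x, u x ≤ (B.inv (S.src e) x : ℝ)) →
      (∀ x, (if S.reset e x then 0 else u x) ≤ (B.inv (S.tgt e) x : ℝ)) →
      Step S B (S.src e, u) (Sum.inr (S.act e))
        (S.tgt e, fun x => if S.reset e x then 0 else u x)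

/-- `InLang S B Obs σ τ`: there is an infinite run of the automaton whose subsequence of
observable actions is exactly `σ`, occurring at global times `τ`. -/
def InLang {Act : Type} (S : TAStruct Act) (B : Bounds S) (Obs : Act → Prop)
    (σ : ℕ → Act) (τ : ℕ → ℝ) : Prop :=
  ∃ (s : ℕ → TAState S) (lab : ℕ → ℝ ⊕ Act),
    s 0 = initState S ∧
    (∀ i, Step S B (s i) (lab i) (s (i + 1))) ∧
    ∃ f : ℕ → ℕ, StrictMono f ∧
      (∀ i, lab (f i) = Sum.inr (σ i)) ∧
      (∀ i, Obs (σ i)) ∧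
      (∀ j a, lab j = Sum.inr a → Obs a → ∃ i, f i = j) ∧
      (∀ i, τ i = ∑ k ∈ Finset.range (f i), Sum.elim id (fun _ => (0 : ℝ)) (lab k))

/-- The timed language: timed words `(σ, τ)` over observable actions, with `τ` strictly
increasing and divergent (progress condition). -/
def TALanguage {Act : Type} (S : TAStruct Act) (B : Bounds S) (Obs : Act → Prop) :
    Set ((ℕ → Act) × (ℕ → ℝ)) :=
  {w | StrictMono w.2 ∧ (∀ t : ℝ, ∃ i, w.2 i > t) ∧ InLang S B Obs w.1 w.2}

/-- `sim` is a timed simulation of `(S1,B1)` by `(S2,B2)`: initial states related, delays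
matched by equal delays, observable discrete transitions matched by the same action, and
unobservable ones matched by the same action or a silent step. -/
def IsTimedSim {Act : Type} (Obs : Act → Prop)
    (S1 : TAStruct Act) (B1 : Bounds S1) (S2 : TAStruct Act) (B2 : Bounds S2)
    (sim : TAState S1 → TAState S2 → Prop) : Prop :=
  sim (initState S1) (initState S2) ∧
  (∀ s1 s2, sim s1 s2 → ∀ (d : ℝ) s1', Step S1 B1 s1 (Sum.inl d) s1' →
    ∃ s2', Step S2 B2 s2 (Sum.inl d) s2' ∧ sim s1' s2') ∧
  (∀ s1 s2, sim s1 s2 → ∀ (a : Act) s1', Step S1 B1 s1 (Sum.inr a) s1' →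
    (Obs a → ∃ s2', Step S2 B2 s2 (Sum.inr a) s2' ∧ sim s1' s2') ∧
    (¬ Obs a → ∃ s2', (Step S2 B2 s2 (Sum.inr a) s2' ∨ s2' = s2) ∧ sim s1' s2'))

/-- `(S2,B2)` timed-simulates `(S1,B1)`. -/
def TimedSim {Act : Type} (Obs : Act → Prop)
    (S1 : TAStruct Act) (B1 : Bounds S1) (S2 : TAStruct Act) (B2 : Bounds S2) : Prop :=
  ∃ sim, IsTimedSim Obs S1 B1 S2 B2 sim

/-- Abstraction rule R1: decrease guard lower bounds by `ΔG` (truncated subtraction)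
and increase invariant upper bounds by `ΔI`. -/
def R1 {Act : Type} {S : TAStruct Act} (B : Bounds S)
    (ΔG : S.Edge → S.Clock → ℕ) (ΔI : S.Loc → S.Clock → ℕ) : Bounds S :=
  ⟨fun e x => B.guard e x - ΔG e x, fun l x => B.inv l x + ΔI l x⟩


lemma step_mono {Act : Type} {S : TAStruct Act} {B B' : Bounds S}
    (hg : ∀ e x, B'.guard e x ≤ B.guard e x)
    (hi : ∀ l x, B.inv l x ≤ B'.inv l x)
    {s l t} (h : Step S B s l t) : Step S B' s l t := by
  cases h with
  | delay l u d hd hinv =>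
      exact Step.delay l u d hd (fun d' h0 h1 x =>
        (hinv d' h0 h1 x).trans (by exact_mod_cast hi l x))
  | disc e u hg1 hi1 hi2 =>
      exact Step.disc e u
        (fun x => le_trans (by exact_mod_cast hg e x) (hg1 x))
        (fun x => (hi1 x).trans (by exact_mod_cast hi _ x))
        (fun x => (hi2 x).trans (by exact_mod_cast hi _ x))

lemma id_sim_of_mono {Act : Type} (Obs : Act → Prop) {S : TAStruct Act} {B B' : Bounds S}
    (hg : ∀ e x, B'.guard e x ≤ B.guard e x)
    (hi : ∀ l x, B.inv l x ≤ B'.inv l x) :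
    IsTimedSim Obs S B S B' (fun s1 s2 => s1 = s2) := by
  refine ⟨rfl, ?_, ?_⟩
  · rintro s1 s2 rfl d s1' h
    exact ⟨s1', step_mono hg hi h, rfl⟩
  · rintro s1 s2 rfl a s1' h
    exact ⟨fun _ => ⟨s1', step_mono hg hi h, rfl⟩,
           fun _ => ⟨s1', Or.inl (step_mono hg hi h), rfl⟩⟩

/-- the merged automaton A3 (componentwise-min guard bounds,
componentwise-max invariant bounds) timed-simulates both A1 and A2, via the identity
relation on states. -/
theorem merge_simulates_both {Act : Type} (Obs : Act → Prop)
    (S : TAStruct Act) (B1 B2 B3 : Bounds S)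
    (hB3 : B3 = ⟨fun e x => min (B1.guard e x) (B2.guard e x),
                 fun l x => max (B1.inv l x) (B2.inv l x)⟩) :
    IsTimedSim Obs S B1 S B3 (fun s1 s2 => s1 = s2) ∧
    IsTimedSim Obs S B2 S B3 (fun s1 s2 => s1 = s2) := by
  subst hB3
  exact ⟨id_sim_of_mono Obs (fun e x => min_le_left _ _) (fun l x => le_max_left _ _),
         id_sim_of_mono Obs (fun e x => min_le_right _ _) (fun l x => le_max_right _ _)⟩
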